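/- The pivots of the Neville elimination of the reverse Bessel coefficient matrix C are: for odd j, p_{ij} = (2i-2j)!/(2^{i-j}(i-j)!) for 1 ≤ j ≤ i ≤ n; for even j, p_{ij} = 0 for i > j and p_{jj} = 1. -/

import Mathlib

/-- Entries of the lower triangular reverse Bessel coefficient matrix. -/
noncomputable def revC (i j : ℕ) : ℝ :=
  if j ≤ i then ((2 * i - j - 1).factorial : ℝ) / (2 ^ (i - j) * (j - 1).factorial * (i - j).factorial)
  else 0

/-- `revNE k i j` is the `(i,j)` entry of `C^{(k+1)}`, the matrix obtained after `k`
steps of Neville elimination of the reverse Bessel coefficient matrix. -/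
noncomputable def revNE : ℕ → ℕ → ℕ → ℝ
  | 0, i, j => revC i j
  | k + 1, i, j =>
      if k + 1 ≤ j ∧ j < i ∧ revNE k (i - 1) (k + 1) ≠ 0 then
        revNE k i j - revNE k i (k + 1) / revNE k (i - 1) (k + 1) * revNE k (i - 1) j
      else revNE k i j

/-!
Two consecutive Neville steps on `C` leave the block matrix `diag(I₂, C)`: column 1 of `C`
satisfies `c_{m+2,1} = (2m+1) c_{m+1,1}`, column 2 agrees with column 1 below the diagonal,
and the remaining columns obey `c_{m+2,s+3} = (2m+1) c_{m+1,s+3} + c_{m,s+1}`. So the first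
step (multipliers `2m+1`) clears columns 1 and 2 and shifts `C` down the diagonal by two, and
the second step finds a zero pivot column and changes nothing. By induction the matrix after
`2m` steps is `diag(I_{2m}, C)`, whose pivot column `2m+1` is the first column of `C`, and after
`2m+1` steps it is `diag(I_{2m+2}, C)`, whose pivot column `2m+2` is a unit vector.
-/

lemma revC_of_le {i j : ℕ} (h : i ≤ j) : revC i j = if i = j then 1 else 0 := by
  rcases h.eq_or_lt with rfl | hlt
  · rw [revC, if_pos le_rfl, show 2 * i - i - 1 = i - 1 by omega, Nat.sub_self]
    simp [Nat.factorial_ne_zero]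
  · rw [revC, if_neg (by omega), if_neg hlt.ne]

lemma revC_add_add_one (j t : ℕ) :
    revC (j + t + 1) (j + 1) =
      ((2 * t + j).factorial : ℝ) / (2 ^ t * j.factorial * t.factorial) := by
  rw [revC, if_pos (by omega), show 2 * (j + t + 1) - (j + 1) - 1 = 2 * t + j by omega,
    show j + 1 - 1 = j by omega, show j + t + 1 - (j + 1) = t by omega]

lemma revC_succ_one (t : ℕ) :
    revC (t + 1) 1 = ((2 * t).factorial : ℝ) / (2 ^ t * t.factorial) := by
  simpa using revC_add_add_one 0 t

lemma revC_succ_one_pos (t : ℕ) : 0 < revC (t + 1) 1 := by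
  rw [revC_succ_one]; positivity

lemma revC_add_two_one (m : ℕ) : revC (m + 2) 1 = (2 * m + 1) * revC (m + 1) 1 := by
  rw [revC_succ_one, revC_succ_one, show 2 * (m + 1) = 2 * m + 1 + 1 by ring,
    Nat.factorial_succ, Nat.factorial_succ, Nat.factorial_succ]
  push_cast
  field_simp
  ring

lemma revC_add_two_two (m : ℕ) : revC (m + 2) 2 = revC (m + 2) 1 := by
  have h2 := revC_add_add_one 1 m
  rw [show 1 + m + 1 = m + 2 by ring, show (1 + 1 : ℕ) = 2 from rfl] at h2
  rw [h2, show m + 2 = m + 1 + 1 from rfl, revC_succ_one, show 2 * (m + 1) = 2 * m + 1 + 1 by ring,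
    Nat.factorial_succ (2 * m + 1), Nat.factorial_succ m]
  push_cast
  field_simp
  ring

lemma revC_add_two_add_three {m s : ℕ} (h : s + 2 ≤ m) :
    revC (m + 2) (s + 3) = (2 * m + 1) * revC (m + 1) (s + 3) + revC m (s + 1) := by
  obtain ⟨t, rfl⟩ := Nat.exists_eq_add_of_le h
  have e1 : revC (s + 2 + t + 2) (s + 3) = ((2 * (t + 1) + (s + 2)).factorial : ℝ) /
      (2 ^ (t + 1) * (s + 2).factorial * (t + 1).factorial) := by
    rw [← revC_add_add_one]; ring_nf
  have e2 : revC (s + 2 + t + 1) (s + 3) = ((2 * t + (s + 2)).factorial : ℝ) /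
      (2 ^ t * (s + 2).factorial * t.factorial) := by
    rw [← revC_add_add_one]
  have e3 : revC (s + 2 + t) (s + 1) = ((2 * (t + 1) + s).factorial : ℝ) /
      (2 ^ (t + 1) * s.factorial * (t + 1).factorial) := by
    rw [← revC_add_add_one]; ring_nf
  rw [e1, e2, e3, show 2 * (t + 1) + (s + 2) = 2 * t + (s + 2) + 1 + 1 by ring,
    show 2 * (t + 1) + s = 2 * t + (s + 2) by ring, Nat.factorial_succ, Nat.factorial_succ,
    Nat.factorial_succ (s + 1), Nat.factorial_succ s, Nat.factorial_succ t]
  push_cast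
  field_simp
  ring

lemma revC_sub_neville {m s : ℕ} (hs : 1 ≤ s) (hsm : s ≤ m + 1) :
    revC (m + 2) s - revC (m + 2) 1 / revC (m + 1) 1 * revC (m + 1) s =
      if s ≤ 2 then 0 else revC m (s - 2) := by
  rw [revC_add_two_one, mul_div_assoc, div_self (revC_succ_one_pos m).ne', mul_one]
  obtain rfl | rfl | ⟨s, rfl⟩ : s = 1 ∨ s = 2 ∨ ∃ s', s = s' + 3 :=
    by rcases s with _ | _ | _ | s' <;> simp_all
  · rw [revC_add_two_one, sub_self, if_pos (by norm_num)]
  · obtain ⟨m, rfl⟩ : ∃ m', m = m' + 1 := ⟨m - 1, by omega⟩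
    rw [revC_add_two_two, revC_add_two_two, show m + 1 + 1 = m + 2 by ring, revC_add_two_one,
      sub_self, if_pos (by norm_num)]
  · rw [revC_add_two_add_three (by omega), if_neg (by omega), show s + 3 - 2 = s + 1 by omega]
    ring

/-- `diag(I_e, C)`, in the 1-based indexing of `revC`. -/
noncomputable def blockDiagC (e i j : ℕ) : ℝ :=
  if j ≤ e then (if i = j then 1 else 0) else revC (i - e) (j - e)

lemma blockDiagC_of_le {e i j : ℕ} (h : i ≤ j) : blockDiagC e i j = if i = j then 1 else 0 := by
  by_cases hj : j ≤ e
  · rw [blockDiagC, if_pos hj]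
  · rw [blockDiagC, if_neg hj, revC_of_le (by omega)]
    by_cases hij : i = j
    · rw [if_pos (by omega), if_pos hij]
    · rw [if_neg (by omega), if_neg hij]

lemma revNE_succ_eq_blockDiagC_add_two {k : ℕ}
    (h : ∀ i j, 1 ≤ j → revNE k i j = blockDiagC k i j) {i j : ℕ} (hj : 1 ≤ j) :
    revNE (k + 1) i j = blockDiagC (k + 2) i j := by
  have hpivot : revNE k (i - 1) (k + 1) = revC (i - 1 - k) 1 := by
    rw [h _ _ (by omega), blockDiagC, if_neg (by omega), Nat.add_sub_cancel_left]
  rw [revNE]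
  by_cases hji : k + 1 ≤ j ∧ j < i
  · obtain ⟨m, rfl⟩ : ∃ m, i = k + m + 2 := ⟨i - k - 2, by omega⟩
    obtain ⟨s, rfl⟩ : ∃ s, j = k + s := ⟨j - k, by omega⟩
    have hpivot_ne : revNE k (k + m + 2 - 1) (k + 1) ≠ 0 := by
      rw [hpivot, show k + m + 2 - 1 - k = m + 1 by omega]
      exact (revC_succ_one_pos m).ne'
    rw [if_pos ⟨hji.1, hji.2, hpivot_ne⟩, hpivot, h _ _ hj, h _ _ (by omega), h _ _ (by omega)]
    simp only [blockDiagC]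
    rw [if_neg (by omega), if_neg (by omega), if_neg (by omega),
      if_neg (show k + m + 2 ≠ k + s by omega),
      show k + m + 2 - 1 - k = m + 1 by omega, show k + m + 2 - k = m + 2 by omega,
      show k + m + 2 - (k + 2) = m by omega, Nat.add_sub_cancel_left, Nat.add_sub_cancel_left,
      Nat.add_sub_add_left, revC_sub_neville (by omega) (by omega)]
    simp only [add_le_add_iff_left]
  · have hpivot_ne : j < i → k + 1 ≤ j → revNE k (i - 1) (k + 1) ≠ 0 := fun _ _ => by
      rw [hpivot, show i - 1 - k = i - k - 2 + 1 by omega]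
      exact (revC_succ_one_pos _).ne'
    rw [if_neg (by tauto), h i j hj]
    by_cases hjk : j ≤ k
    · simp only [blockDiagC, if_pos hjk, if_pos (show j ≤ k + 2 by omega)]
    · rw [blockDiagC_of_le (by omega), blockDiagC_of_le (by omega)]

lemma revNE_succ_eq_blockDiagC_succ {k : ℕ}
    (h : ∀ i j, 1 ≤ j → revNE k i j = blockDiagC (k + 1) i j) {i j : ℕ} (hj : 1 ≤ j) :
    revNE (k + 1) i j = blockDiagC (k + 1) i j := by
  rw [revNE]
  split_ifs with hc
  · obtain ⟨hkj, hji, hpivot⟩ := hc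
    rw [h _ _ (by omega), blockDiagC, if_pos le_rfl] at hpivot
    have hi : i - 1 = k + 1 := by_contra fun hne => hpivot (if_neg hne)
    have hzero : revNE k i (k + 1) = 0 := by
      rw [h _ _ (by omega), blockDiagC, if_pos le_rfl, if_neg (by omega)]
    rw [hzero, zero_div, zero_mul, sub_zero, h _ _ hj]
  · exact h _ _ hj

lemma revNE_two_mul (m : ℕ) {i j : ℕ} (hj : 1 ≤ j) :
    revNE (2 * m) i j = blockDiagC (2 * m) i j := by
  induction m generalizing i j with
  | zero => simp [revNE, blockDiagC, show ¬ j ≤ 0 by omega]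
  | succ m ih =>
    exact revNE_succ_eq_blockDiagC_succ
      (fun _ _ hj => revNE_succ_eq_blockDiagC_add_two (fun _ _ hj => ih hj) hj) hj

theorem revBessel_NE_pivots (n : ℕ) :
    (∀ i j : ℕ, Odd j → 1 ≤ j → j ≤ i → i ≤ n →
        revNE (j - 1) i j = ((2 * i - 2 * j).factorial : ℝ) / (2 ^ (i - j) * (i - j).factorial)) ∧
      (∀ i j : ℕ, Even j → 1 ≤ j → j < i → i ≤ n → revNE (j - 1) i j = 0) ∧
      (∀ j : ℕ, Even j → 1 ≤ j → j ≤ n → revNE (j - 1) j j = 1) := by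
  have even_pivot : ∀ i j : ℕ, Even j → 1 ≤ j → revNE (j - 1) i j = if i = j then 1 else 0 := by
    rintro i j ⟨m, rfl⟩ hj
    obtain ⟨m, rfl⟩ : ∃ m', m = m' + 1 := ⟨m - 1, by omega⟩
    rw [show m + 1 + (m + 1) - 1 = 2 * m + 1 by ring_nf; omega,
      revNE_succ_eq_blockDiagC_add_two (fun _ _ hj => revNE_two_mul m hj) hj, blockDiagC,
      if_pos (by omega)]
  refine ⟨fun i j ⟨m, hm⟩ hj hji _ => ?_, fun i j heven hj hji _ => ?_,
    fun j heven hj _ => ?_⟩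
  · subst hm
    obtain ⟨t, rfl⟩ := Nat.exists_eq_add_of_le hji
    rw [Nat.add_sub_cancel, revNE_two_mul m hj, blockDiagC, if_neg (by omega),
      show 2 * m + 1 + t - 2 * m = t + 1 by omega, show 2 * m + 1 - 2 * m = 1 by omega,
      revC_succ_one, show 2 * (2 * m + 1 + t) - 2 * (2 * m + 1) = 2 * t by omega,
      Nat.add_sub_cancel_left]
  · rw [even_pivot i j heven hj, if_neg hji.ne']
  · rw [even_pivot j j heven hj, if_pos rfl]
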